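/- Let μ be a centred probability measure on ℝ (μ ≠ δ₀) with distribution function F, b < 0 < b̄, and suppose condition (2.7) fails (m̃_{F(b)}^{F(b̄−)} + γb < 0 with γ = 1 − F(b̄−) + F(b)), and (2.8) holds (m̃_{F(b)}^{F(b̄−)} + γb̄ ≤ 0). Set ξ = F(b). Then the function π ↦ m̃^ξ + m̃_{F(b̄−)}^π − b(ξ + π − F(b̄−)) on [F(b̄−),1) is non-positive at π = F(b̄−) and has strictly positive limit as π → 1; hence there exists π* ∈ [F(b̄−),1) with m̃^ξ + m̃_{F(b̄−)}^{π*} = b(ξ + π* − F(b̄−)). -/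

import Mathlib

/-!
With `F⁻¹` the quantile function, `m̃_p^q = ∫_(p,q] F⁻¹`, so `π ↦ m̃_p^π` is continuous and additive
over adjacent intervals, and `m̃_0^1 = ∫ x dμ = 0` because `F⁻¹` pushes Lebesgue measure on `(0,1)`
forward to `μ`. At `π = F(b̄−)` the function equals `m̃^ξ - bξ ≤ 0`, since `F⁻¹ ≤ b` on `(0, ξ]`.
At `π = 1` additivity and centring turn it into `-(m̃_ξ^{F(b̄−)} + γb)`, which is positive because
(2.7) fails; the intermediate value theorem gives `π*`.
-/

open MeasureTheory Set

/-- Distribution function of `μ`. -/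
noncomputable def distF (μ : Measure ℝ) (x : ℝ) : ℝ := (μ (Iic x)).toReal

/-- Left limit `F(x-)` of the distribution function. -/
noncomputable def distFm (μ : Measure ℝ) (x : ℝ) : ℝ := (μ (Iio x)).toReal

/-- Quantile function of `μ`. -/
noncomputable def quantile (μ : Measure ℝ) (u : ℝ) : ℝ :=
  sInf {x : ℝ | u ≤ distF μ x}

/-- The sub-probability measure `μ_p^q`, i.e. `μ` restricted to its quantile range `(p,q]`,
realised as the image under the quantile function of Lebesgue measure on `(p,q]`. -/
noncomputable def qmeas (μ : Measure ℝ) (p q : ℝ) : Measure ℝ :=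
  (volume.restrict (Ioc p q)).map (quantile μ)

/-- `m̃_p^q = ∫ x dμ_p^q`. -/
noncomputable def mtil (μ : Measure ℝ) (p q : ℝ) : ℝ :=
  ∫ u in Ioc p q, quantile μ u

/-- The barycentre `m_p^q` of `μ` restricted to the quantile range `(p,q]`. -/
noncomputable def bary (μ : Measure ℝ) (p q : ℝ) : ℝ :=
  if p < q then (q - p)⁻¹ * mtil μ p q else quantile μ q

open Filter Topology

open ProbabilityTheory

lemma distF_nonneg (μ : Measure ℝ) (x : ℝ) : 0 ≤ distF μ x := ENNReal.toReal_nonneg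

lemma quantile_of_nonpos {μ : Measure ℝ} {u : ℝ} (hu : u ≤ 0) : quantile μ u = 0 := by
  have : {x | u ≤ distF μ x} = univ := eq_univ_of_forall fun x => hu.trans (distF_nonneg μ x)
  rw [quantile, this, Real.sInf_univ]

section Quantile

variable (μ : Measure ℝ) [IsProbabilityMeasure μ]

lemma distF_eq_cdf (x : ℝ) : distF μ x = cdf μ x := (cdf_eq_real μ x).symm

lemma monotone_distF : Monotone (distF μ) := fun _ _ h => by
  simpa only [distF_eq_cdf] using monotone_cdf μ h

lemma distF_le_one (x : ℝ) : distF μ x ≤ 1 := by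
  rw [distF_eq_cdf]; exact cdf_le_one μ x

lemma distFm_le_one (x : ℝ) : distFm μ x ≤ 1 := measureReal_le_one

variable {μ}

lemma distF_le_distFm {a b : ℝ} (h : a < b) : distF μ a ≤ distFm μ b :=
  measureReal_mono (Iic_subset_Iio.2 h)

lemma bddBelow_setOf_le_distF {u : ℝ} (hu : 0 < u) : BddBelow {x | u ≤ distF μ x} := by
  obtain ⟨x₀, hx₀⟩ := ((tendsto_cdf_atBot μ).eventually_lt_const hu).exists
  refine ⟨x₀, fun x hx => le_of_not_gt fun hlt => ?_⟩
  have : distF μ x ≤ cdf μ x₀ := distF_eq_cdf μ x₀ ▸ monotone_distF μ hlt.le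
  exact (lt_of_le_of_lt (hx : u ≤ distF μ x) (this.trans_lt hx₀)).false

lemma nonempty_setOf_le_distF {u : ℝ} (hu : u < 1) : {x | u ≤ distF μ x}.Nonempty := by
  obtain ⟨x, hx⟩ := ((tendsto_cdf_atTop μ).eventually_const_lt hu).exists
  exact ⟨x, show u ≤ distF μ x by rw [distF_eq_cdf]; exact hx.le⟩

lemma quantile_le_of_le_distF {u x : ℝ} (hu : 0 < u) (hx : u ≤ distF μ x) : quantile μ u ≤ x :=
  csInf_le (bddBelow_setOf_le_distF hu) hx

-- The infimum is attained because `F` is right-continuous.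
lemma le_distF_quantile {u : ℝ} (hu : u ∈ Ioo 0 1) : u ≤ distF μ (quantile μ u) := by
  have hmem : quantile μ u ∈ closure {x | u ≤ distF μ x} :=
    csInf_mem_closure (nonempty_setOf_le_distF hu.2) (bddBelow_setOf_le_distF hu.1)
  have hcont : ContinuousWithinAt (cdf μ) {x | u ≤ distF μ x} (quantile μ u) :=
    ((cdf μ).right_continuous _).mono fun x hx => csInf_le (bddBelow_setOf_le_distF hu.1) hx
  rw [distF_eq_cdf]
  exact ContinuousWithinAt.closure_le hmem continuousWithinAt_const hcont
    fun x hx => distF_eq_cdf μ x ▸ hx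

lemma quantile_le_iff {u x : ℝ} (hu : u ∈ Ioo 0 1) : quantile μ u ≤ x ↔ u ≤ distF μ x :=
  ⟨fun h => (le_distF_quantile hu).trans (monotone_distF μ h), quantile_le_of_le_distF hu.1⟩

lemma monotoneOn_quantile : MonotoneOn (quantile μ) (Ioo 0 1) := fun _ hu _ hv huv =>
  csInf_le_csInf (bddBelow_setOf_le_distF hu.1) (nonempty_setOf_le_distF hv.2)
    fun _ hx => huv.trans hx

lemma quantile_of_one_lt {u : ℝ} (hu : 1 < u) : quantile μ u = 0 := by
  have : {x | u ≤ distF μ x} = ∅ :=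
    eq_empty_of_forall_notMem fun x hx => (distF_le_one μ x).not_gt (hu.trans_le hx)
  rw [quantile, this, Real.sInf_empty]

lemma support_quantile_subset : Function.support (quantile μ) ⊆ Ioc 0 1 := fun _ hu =>
  ⟨lt_of_not_ge fun h => hu (quantile_of_nonpos h),
    le_of_not_gt fun h => hu (quantile_of_one_lt h)⟩

lemma aemeasurable_quantile : AEMeasurable (quantile μ) (volume.restrict (Ioo 0 1)) :=
  aemeasurable_restrict_of_monotoneOn measurableSet_Ioo monotoneOn_quantile

lemma map_quantile_volume : (volume.restrict (Ioo 0 1)).map (quantile μ) = μ := by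
  refine (Measure.ext_of_Iic μ _ fun x => ?_).symm
  have hpre : quantile μ ⁻¹' Iic x ∩ Ioo 0 1 = Ioc 0 (distF μ x) \ {1} := by
    ext u
    simp only [mem_inter_iff, mem_preimage, mem_Iic, Set.mem_sdiff, mem_singleton_iff]
    constructor
    · rintro ⟨hx, hu⟩
      exact ⟨⟨hu.1, (quantile_le_iff hu).1 hx⟩, hu.2.ne⟩
    · rintro ⟨hu, hu1⟩
      have hu' : u ∈ Ioo 0 1 := ⟨hu.1, lt_of_le_of_ne (hu.2.trans (distF_le_one μ x)) hu1⟩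
      exact ⟨(quantile_le_iff hu').2 hu.2, hu'⟩
  rw [Measure.map_apply_of_aemeasurable aemeasurable_quantile measurableSet_Iic,
    Measure.restrict_apply' measurableSet_Ioo, hpre, measure_sdiff_null (measure_singleton 1),
    Real.volume_Ioc, sub_zero, distF, ENNReal.ofReal_toReal (measure_ne_top μ _)]

lemma integrable_quantile (hint : Integrable id μ) : Integrable (quantile μ) := by
  rw [← integrableOn_iff_integrable_of_support_subset support_quantile_subset,
    integrableOn_Ioc_iff_integrableOn_Ioo]
  rw [← map_quantile_volume (μ := μ)] at hint
  exact (integrable_map_measure aestronglyMeasurable_id aemeasurable_quantile).1 hint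

end Quantile

section PartialMean

variable {μ : Measure ℝ} [IsProbabilityMeasure μ]

lemma mtil_zero_one : mtil μ 0 1 = ∫ x, x ∂μ := by
  conv_rhs => rw [← map_quantile_volume (μ := μ)]
  rw [mtil, integral_Ioc_eq_integral_Ioo,
    integral_map (f := fun x => x) aemeasurable_quantile aestronglyMeasurable_id]

lemma mtil_add_mtil (hint : Integrable id μ) {p q r : ℝ} (hpq : p ≤ q) (hqr : q ≤ r) :
    mtil μ p q + mtil μ q r = mtil μ p r := by
  rw [mtil, mtil, mtil, ← setIntegral_union (Ioc_disjoint_Ioc_of_le le_rfl) measurableSet_Ioc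
    (integrable_quantile hint).integrableOn (integrable_quantile hint).integrableOn,
    Ioc_union_Ioc_eq_Ioc hpq hqr]

lemma continuousOn_mtil (hint : Integrable id μ) (p : ℝ) : ContinuousOn (mtil μ p) (Ici p) :=
  ((integrable_quantile hint).continuous_primitive p).continuousOn.congr fun _ hr =>
    (intervalIntegral.integral_of_le hr).symm

lemma mtil_zero_distF_le (hint : Integrable id μ) (b : ℝ) :
    mtil μ 0 (distF μ b) ≤ b * distF μ b := by
  have hb : ∀ u ∈ Ioc 0 (distF μ b), quantile μ u ≤ b := fun u hu =>
    quantile_le_of_le_distF hu.1 hu.2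
  calc mtil μ 0 (distF μ b) ≤ ∫ _ in Ioc 0 (distF μ b), b :=
        setIntegral_mono_on (integrable_quantile hint).integrableOn
          (integrableOn_const measure_Ioc_lt_top.ne) measurableSet_Ioc hb
    _ = b * distF μ b := by
        rw [setIntegral_const, smul_eq_mul, measureReal_def, Real.volume_Ioc, sub_zero,
          ENNReal.toReal_ofReal (distF_nonneg μ b), mul_comm]

end PartialMean

theorem stmt12_general (μ : Measure ℝ) [IsProbabilityMeasure μ]
    (hint : Integrable id μ) (hcent : ∫ x, x ∂μ = 0)
    (lb ub : ℝ) (hlb : lb < 0) (hub : 0 < ub)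
    (h27fail : mtil μ (distF μ lb) (distFm μ ub) +
      (1 - distFm μ ub + distF μ lb) * lb < 0) :
    (mtil μ 0 (distF μ lb) + mtil μ (distFm μ ub) (distFm μ ub) -
        lb * (distF μ lb + distFm μ ub - distFm μ ub) ≤ 0) ∧
    Tendsto
      (fun π => mtil μ 0 (distF μ lb) + mtil μ (distFm μ ub) π -
        lb * (distF μ lb + π - distFm μ ub))
      (𝓝[<] 1)
      (𝓝 (-(mtil μ (distF μ lb) (distFm μ ub)) -
        (1 - distFm μ ub + distF μ lb) * lb)) ∧
    0 < -(mtil μ (distF μ lb) (distFm μ ub)) -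
        (1 - distFm μ ub + distF μ lb) * lb ∧
    ∃ π ∈ Ico (distFm μ ub) 1,
      mtil μ 0 (distF μ lb) + mtil μ (distFm μ ub) π =
        lb * (distF μ lb + π - distFm μ ub) := by
  set ξ := distF μ lb
  set q := distFm μ ub
  set φ : ℝ → ℝ := fun π => mtil μ 0 ξ + mtil μ q π - lb * (ξ + π - q)
  have hξq : ξ ≤ q := distF_le_distFm (hlb.trans hub)
  have hq1 : q ≤ 1 := distFm_le_one μ ub
  have hφq : φ q ≤ 0 := by
    have hqq : mtil μ q q = 0 := by simp [mtil]
    have hξ := mtil_zero_distF_le hint lb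
    simp only [φ, hqq]
    linarith
  have hφ1 : φ 1 = -mtil μ ξ q - (1 - q + ξ) * lb := by
    have h0q := mtil_add_mtil hint (distF_nonneg μ lb) hξq
    have h01 := mtil_add_mtil hint (distF_nonneg μ lb |>.trans hξq) hq1
    have hmean := mtil_zero_one (μ := μ)
    simp only [φ]
    linarith
  have hpos : 0 < φ 1 := by linarith
  have hq1' : q < 1 := lt_of_le_of_ne hq1 fun h => by rw [h] at hφq; linarith
  have hφcont : ContinuousOn φ (Ici q) :=
    (continuousOn_const.add (continuousOn_mtil hint q)).sub (by fun_prop)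
  refine ⟨hφq, ?_, hφ1 ▸ hpos, ?_⟩
  · exact hφ1 ▸ (hφcont.continuousAt (Ici_mem_nhds hq1')).tendsto.mono_left nhdsWithin_le_nhds
  · obtain ⟨π, hπ, hφπ⟩ :=
      intermediate_value_Ico hq1 (hφcont.mono Icc_subset_Ici_self) ⟨hφq, hpos⟩
    exact ⟨π, hπ, sub_eq_zero.1 hφπ⟩

theorem stmt12 (μ : Measure ℝ) [IsProbabilityMeasure μ]
    (hint : Integrable id μ) (hcent : ∫ x, x ∂μ = 0)
    (hne : μ ≠ Measure.dirac 0) (lb ub : ℝ) (hlb : lb < 0) (hub : 0 < ub)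
    (h27fail : mtil μ (distF μ lb) (distFm μ ub) +
      (1 - distFm μ ub + distF μ lb) * lb < 0)
    (h28 : mtil μ (distF μ lb) (distFm μ ub) +
      (1 - distFm μ ub + distF μ lb) * ub ≤ 0) :
    (mtil μ 0 (distF μ lb) + mtil μ (distFm μ ub) (distFm μ ub) -
        lb * (distF μ lb + distFm μ ub - distFm μ ub) ≤ 0) ∧
    Tendsto
      (fun π => mtil μ 0 (distF μ lb) + mtil μ (distFm μ ub) π -
        lb * (distF μ lb + π - distFm μ ub))
      (𝓝[<] 1)
      (𝓝 (-(mtil μ (distF μ lb) (distFm μ ub)) -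
        (1 - distFm μ ub + distF μ lb) * lb)) ∧
    0 < -(mtil μ (distF μ lb) (distFm μ ub)) -
        (1 - distFm μ ub + distF μ lb) * lb ∧
    ∃ π ∈ Ico (distFm μ ub) 1,
      mtil μ 0 (distF μ lb) + mtil μ (distFm μ ub) π =
        lb * (distF μ lb + π - distFm μ ub) :=
  stmt12_general μ hint hcent lb ub hlb hub h27fail
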